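/- For every tensor A ∈ ℂ^{n1×n2×n3} there exists a unique tensor X ∈ ℂ^{n2×n1×n3} satisfying A *_c X *_c A = A, X *_c A *_c X = X, (A *_c X)^H = A *_c X, and (X *_c A)^H = X *_c A; that is, the Moore-Penrose inverse A^† of A under the C-product exists and is unique. -/

import Mathlib

noncomputable section

/-- A third-order tensor: a family of frontal slices. -/
abbrev Tensor (n1 n2 n3 : ℕ) : Type := Fin n3 → Matrix (Fin n1) (Fin n2) ℂ

namespace Tensor

/-- The block Toeplitz-plus-Hankel matrix `mat(A)` associated to a tensor. -/
def matT {n1 n2 n3 : ℕ} (A : Tensor n1 n2 n3) :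
    Matrix (Fin n3 × Fin n1) (Fin n3 × Fin n2) ℂ := fun p q =>
  A ⟨p.1.1 - q.1.1 + (q.1.1 - p.1.1), by
        have h1 := p.1.isLt; have h2 := q.1.isLt; omega⟩ p.2 q.2 +
    (if h : p.1.1 + q.1.1 + 2 ≤ n3 then A ⟨p.1.1 + q.1.1 + 1, by omega⟩ p.2 q.2
     else if h2 : n3 ≤ p.1.1 + q.1.1 then
       A ⟨2 * n3 - (p.1.1 + q.1.1) - 1, by have h1 := p.1.isLt; omega⟩ p.2 q.2
     else 0)

/-- `ten`, the inverse of `mat` on its range: the slices of a tensor are recovered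
from the first block-column of its `mat` by an alternating sum. -/
def tenT {n1 n2 n3 : ℕ} (M : Matrix (Fin n3 × Fin n1) (Fin n3 × Fin n2) ℂ) :
    Tensor n1 n2 n3 := fun i => Matrix.of fun a b =>
  ∑ t : Fin n3, if i.1 ≤ t.1 then (-1 : ℂ) ^ (t.1 - i.1) * M (t, a) (⟨0, i.pos⟩, b) else 0

/-- The C-product of two tensors: the unique tensor whose `mat` is `mat(A) * mat(B)`. -/
def cmul {n1 n2 l n3 : ℕ} (A : Tensor n1 n2 n3) (B : Tensor n2 l n3) : Tensor n1 l n3 :=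
  tenT (matT A * matT B)

/-- The conjugate transpose of a tensor, taken slice-wise. -/
def conjT {n1 n2 n3 : ℕ} (A : Tensor n1 n2 n3) : Tensor n2 n1 n3 := fun i => (A i).conjTranspose

/-- The identity tensor: the tensor whose `mat` is the identity matrix. -/
def idT {n n3 : ℕ} : Tensor n n n3 := fun i => if i.1 = 0 then 1 else 0

/-- A tensor is unitary if `Qᴴ *c Q = Q *c Qᴴ = I`. -/
def Unitary {n n3 : ℕ} (Q : Tensor n n n3) : Prop :=
  cmul (conjT Q) Q = idT ∧ cmul Q (conjT Q) = idT

/-- `X` is the inverse of the square tensor `B` under the C-product. -/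
def IsInverse {n n3 : ℕ} (B X : Tensor n n n3) : Prop :=
  cmul B X = idT ∧ cmul X B = idT

/-- `X` is the Moore-Penrose inverse of `A` under the C-product. -/
def IsMP {n1 n2 n3 : ℕ} (A : Tensor n1 n2 n3) (X : Tensor n2 n1 n3) : Prop :=
  cmul (cmul A X) A = A ∧ cmul (cmul X A) X = X ∧
    conjT (cmul A X) = cmul A X ∧ conjT (cmul X A) = cmul X A

/-- Powers of a square tensor with respect to the C-product. -/
def cpow {n n3 : ℕ} (A : Tensor n n n3) : ℕ → Tensor n n n3
  | 0 => idT
  | m + 1 => cmul (cpow A m) A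

/-- `ind(A) = k`: `k` is the smallest nonnegative integer with
`rank(mat(A)^k) = rank(mat(A)^(k+1))`. -/
def IsIndex {n n3 : ℕ} (A : Tensor n n n3) (k : ℕ) : Prop :=
  (matT A ^ k).rank = (matT A ^ (k + 1)).rank ∧
    ∀ j < k, (matT A ^ j).rank ≠ (matT A ^ (j + 1)).rank

/-- `X` is the Drazin inverse of `A` (of index `k`) under the C-product. -/
def IsDrazin {n n3 : ℕ} (A : Tensor n n n3) (k : ℕ) (X : Tensor n n n3) : Prop :=
  cmul (cpow A (k + 1)) X = cpow A k ∧ cmul (cmul X A) X = X ∧ cmul A X = cmul X A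

/-- `X` is an inverse of `A` along `G` under the C-product. -/
def IsInvAlong {n1 n2 n3 : ℕ} (A : Tensor n1 n2 n3) (G X : Tensor n2 n1 n3) : Prop :=
  cmul (cmul X A) G = G ∧ cmul (cmul G A) X = G ∧
    (∃ U : Tensor n1 n1 n3, X = cmul G U) ∧
    (∃ V : Tensor n2 n2 n3, conjT X = cmul (conjT G) V)

/-- All frontal slices are diagonal. -/
def FDiag {n1 n2 n3 : ℕ} (A : Tensor n1 n2 n3) : Prop :=
  ∀ (i : Fin n3) (a : Fin n1) (b : Fin n2), (a : ℕ) ≠ (b : ℕ) → A i a b = 0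

/-- All frontal slices are upper triangular. -/
def FUpper {n1 n2 n3 : ℕ} (A : Tensor n1 n2 n3) : Prop :=
  ∀ (i : Fin n3) (a : Fin n1) (b : Fin n2), (b : ℕ) < (a : ℕ) → A i a b = 0

/-- All frontal slices are lower triangular. -/
def FLower {n1 n2 n3 : ℕ} (A : Tensor n1 n2 n3) : Prop :=
  ∀ (i : Fin n3) (a : Fin n1) (b : Fin n2), (a : ℕ) < (b : ℕ) → A i a b = 0

/-- Slice-wise 2×2 block tensor `[[A, B],[C, D]]`. -/
def blockT {r s t u n3 : ℕ} (A : Tensor r t n3) (B : Tensor r u n3)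
    (C : Tensor s t n3) (D : Tensor s u n3) : Tensor (r + s) (t + u) n3 := fun i =>
  Matrix.reindex finSumFinEquiv finSumFinEquiv (Matrix.fromBlocks (A i) (B i) (C i) (D i))

/-- The mode-3 product of a tensor with an `n3 × n3` matrix. -/
def mode3 {n1 n2 n3 : ℕ} (A : Tensor n1 n2 n3) (M : Matrix (Fin n3) (Fin n3) ℂ) :
    Tensor n1 n2 n3 := fun l => ∑ i, M l i • A i

end Tensor

open Tensor

/-!
`mat` is injective (`tenT` inverts it on the first block column), multiplicative, and commutes
with `ᴴ`. Its range is the set of block matrices `M` with `(K ⊗ I) M = M (K ⊗ I)`, where `K` is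
the adjacency matrix of the path `0 - 1 - ⋯ - (n3 - 1)` with a loop at each end: the
Toeplitz-plus-Hankel blocks of `mat A` make it intertwine, and an intertwining matrix is
determined by its first block column. The Moore–Penrose inverse of a matrix `M` is `f(MᴴM) Mᴴ`
with `f(x) = x⁻¹` and `f(0) = 0`, so it inherits the intertwining from `M` and hence equals
`mat X` for a tensor `X`, which is then the Moore–Penrose inverse of `A`. Uniqueness is that of
the matrix Moore–Penrose inverse.
-/

namespace Matrix

section MoorePenrose

variable {m n R : Type*} [Fintype m] [Fintype n] [NonUnitalSemiring R] [StarRing R]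

def IsMoorePenrose (M : Matrix m n R) (X : Matrix n m R) : Prop :=
  M * X * M = M ∧ X * M * X = X ∧ (M * X)ᴴ = M * X ∧ (X * M)ᴴ = X * M

theorem IsMoorePenrose.unique {M : Matrix m n R} {X Y : Matrix n m R}
    (hX : M.IsMoorePenrose X) (hY : M.IsMoorePenrose Y) : X = Y := by
  obtain ⟨h1, h2, h3, h4⟩ := hX
  obtain ⟨g1, g2, g3, g4⟩ := hY
  have hMX : M * X = M * Y :=
    calc M * X = (M * Y * M * X)ᴴ := by rw [g1, h3]
      _ = (M * X)ᴴ * (M * Y)ᴴ := by rw [← conjTranspose_mul, Matrix.mul_assoc _ M X]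
      _ = M * X * M * Y := by rw [h3, g3, Matrix.mul_assoc _ M Y, Matrix.mul_assoc]
      _ = M * Y := by rw [h1]
  have hXM : X * M = Y * M :=
    calc X * M = (X * (M * Y * M))ᴴ := by rw [g1, h4]
      _ = (Y * M)ᴴ * (X * M)ᴴ := by rw [← conjTranspose_mul]; simp only [Matrix.mul_assoc]
      _ = Y * (M * X * M) := by rw [h4, g4]; simp only [Matrix.mul_assoc]
      _ = Y * M := by rw [h1]
  calc X = Y * M * X := by rw [← hXM, h2]
    _ = Y := by rw [Matrix.mul_assoc, hMX, ← Matrix.mul_assoc, g2]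

end MoorePenrose

section Hermitian

variable {n 𝕜 : Type*} [Fintype n] [DecidableEq n] [RCLike 𝕜]

lemma cfc_mul_cfc (A : Matrix n n 𝕜) (f g : ℝ → ℝ) :
    cfc f A * cfc g A = cfc (fun x => f x * g x) A :=
  (cfc_mul f g A (A.finite_real_spectrum.continuousOn f)
    (A.finite_real_spectrum.continuousOn g)).symm

lemma cfc_mul_self {A : Matrix n n 𝕜} (hA : IsSelfAdjoint A) (f : ℝ → ℝ) :
    cfc f A * A = cfc (fun x => f x * x) A := by
  rw [← cfc_mul_cfc, cfc_id' ℝ A]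

lemma cfc_sub_one {A : Matrix n n 𝕜} (hA : IsSelfAdjoint A) (f : ℝ → ℝ) :
    cfc f A - 1 = cfc (fun x => f x - 1) A := by
  rw [← cfc_one ℝ A, ← cfc_sub f 1 A (A.finite_real_spectrum.continuousOn _)
    (A.finite_real_spectrum.continuousOn _)]
  rfl

lemma conjTranspose_cfc (A : Matrix n n 𝕜) (f : ℝ → ℝ) : (cfc f A)ᴴ = cfc f A :=
  IsSelfAdjoint.cfc

end Hermitian

variable {m n 𝕜 : Type*} [Fintype m] [Fintype n] [DecidableEq n] [RCLike 𝕜]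

/-- `0⁻¹ = 0` makes `cfc (·⁻¹)` the inverse of the Gram matrix on its range and zero on its
kernel. -/
def pinv (M : Matrix m n 𝕜) : Matrix n m 𝕜 :=
  cfc (fun x : ℝ => x⁻¹) (Mᴴ * M) * Mᴴ

variable (M : Matrix m n 𝕜)

lemma pinv_mul : pinv M * M = cfc (fun x : ℝ => x⁻¹ * x) (Mᴴ * M) := by
  rw [pinv, Matrix.mul_assoc, cfc_mul_self (isHermitian_conjTranspose_mul_self M)]

open scoped ComplexOrder in
lemma mul_pinv_mul : M * pinv M * M = M := by
  have hG : IsSelfAdjoint (Mᴴ * M) := isHermitian_conjTranspose_mul_self M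
  -- `(x⁻¹ x - 1) x (x⁻¹ x - 1)` vanishes identically on `ℝ`.
  have hgram : (M * (pinv M * M - 1))ᴴ * (M * (pinv M * M - 1)) = 0 := by
    rw [pinv_mul, cfc_sub_one hG, conjTranspose_mul, conjTranspose_cfc, Matrix.mul_assoc,
      ← Matrix.mul_assoc Mᴴ, ← Matrix.mul_assoc, cfc_mul_self hG, cfc_mul_cfc]
    refine (cfc_congr fun x _ => ?_).trans (cfc_zero ℝ (Mᴴ * M))
    rcases eq_or_ne x 0 with rfl | hx <;> simp [*]
  have := conjTranspose_mul_self_eq_zero.mp hgram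
  rwa [Matrix.mul_sub, Matrix.mul_one, sub_eq_zero, ← Matrix.mul_assoc] at this

lemma isMoorePenrose_pinv : M.IsMoorePenrose (pinv M) := by
  refine ⟨mul_pinv_mul M, ?_, ?_, ?_⟩
  · rw [pinv_mul, pinv, ← Matrix.mul_assoc, cfc_mul_cfc]
    congr 2 with x
    rcases eq_or_ne x 0 with rfl | hx <;> field_simp [*]
  · rw [pinv, ← Matrix.mul_assoc, conjTranspose_mul, conjTranspose_mul, conjTranspose_cfc,
      conjTranspose_conjTranspose, Matrix.mul_assoc]
  · rw [pinv_mul, conjTranspose_cfc]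

lemma mul_pinv_eq_pinv_mul {K₁ : Matrix m m 𝕜} {K₂ : Matrix n n 𝕜}
    (h : K₁ * M = M * K₂) (h' : K₂ * Mᴴ = Mᴴ * K₁) : K₂ * pinv M = pinv M * K₁ := by
  have hB : Commute (cfc (fun x : ℝ => x⁻¹) (Mᴴ * M)) K₂ := by
    refine Commute.cfc_real ?_ _
    rw [commute_iff_eq, Matrix.mul_assoc, ← h, ← Matrix.mul_assoc, ← h', Matrix.mul_assoc]
  rw [pinv, ← Matrix.mul_assoc, ← hB.eq, Matrix.mul_assoc, h', Matrix.mul_assoc]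

end Matrix

namespace Tensor

open Matrix
open scoped Kronecker

variable {n1 n2 n3 : ℕ}

/-- The slices continued by `A^(n3) = 0` and the reflection `A^(n3 + r) = A^(n3 - r)`, so that
block `(i, j)` of `mat A` is `extSlice A |i - j| + extSlice A (i + j + 1)`. -/
def extSlice (A : Tensor n1 n2 n3) (k : ℕ) : Matrix (Fin n1) (Fin n2) ℂ :=
  if h : k < n3 then A ⟨k, h⟩ else if h' : 2 * n3 - k < n3 then A ⟨2 * n3 - k, h'⟩ else 0

lemma extSlice_of_lt (A : Tensor n1 n2 n3) {k : ℕ} (h : k < n3) : extSlice A k = A ⟨k, h⟩ :=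
  dif_pos h

lemma extSlice_self (A : Tensor n1 n2 n3) : extSlice A n3 = 0 := by
  rw [extSlice, dif_neg (lt_irrefl _), dif_neg (by omega)]

lemma extSlice_add_eq_sub (A : Tensor n1 n2 n3) {r : ℕ} (hr : r ≤ n3) :
    extSlice A (n3 + r) = extSlice A (n3 - r) := by
  rcases Nat.eq_zero_or_pos r with rfl | hr₀
  · rfl
  rw [extSlice_of_lt A (by omega : n3 - r < n3), extSlice, dif_neg (by omega),
    dif_pos (by omega)]
  congr 2
  omega

lemma conjT_extSlice (A : Tensor n1 n2 n3) (k : ℕ) :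
    extSlice (conjT A) k = (extSlice A k)ᴴ := by
  unfold extSlice
  split_ifs <;> simp [conjT]

def blockEntry (A : Tensor n1 n2 n3) (i j : ℕ) : Matrix (Fin n1) (Fin n2) ℂ :=
  extSlice A (i - j + (j - i)) + extSlice A (i + j + 1)

lemma matT_apply (A : Tensor n1 n2 n3) (i j : Fin n3) (a : Fin n1) (b : Fin n2) :
    matT A (i, a) (j, b) = blockEntry A i j a b := by
  simp only [matT, blockEntry, Matrix.add_apply,
    extSlice_of_lt A (by omega : i - j + (j - i) < n3)]
  congr 1
  split_ifs with h₁ h₂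
  · rw [extSlice_of_lt]
  · rw [extSlice, dif_neg (by omega), dif_pos (by omega)]
    congr 2
  · rw [show (i : ℕ) + j + 1 = n3 by omega, extSlice_self]
    rfl

lemma blockEntry_comm (A : Tensor n1 n2 n3) (i j : ℕ) : blockEntry A i j = blockEntry A j i := by
  rw [blockEntry, blockEntry, Nat.add_comm (i - j), Nat.add_comm i j]

lemma blockEntry_succ_clamp (A : Tensor n1 n2 n3) {i j : ℕ} (hi : i < n3) (hj : j < n3) :
    blockEntry A (min (i + 1) (n3 - 1)) j =
      extSlice A (i + 1 - j + (j - (i + 1))) + extSlice A (i + j + 2) := by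
  rcases Nat.lt_or_ge (i + 1) n3 with h | h
  · rw [min_eq_left (by omega), blockEntry, Nat.add_right_comm i 1 j]
  · rw [min_eq_right (by omega), blockEntry,
      show n3 - 1 - j + (j - (n3 - 1)) = n3 - (j + 1) by omega,
      show n3 - 1 + j + 1 = n3 + j by omega, show i + 1 - j + (j - (i + 1)) = n3 - j by omega,
      show i + j + 2 = n3 + (j + 1) by omega, extSlice_add_eq_sub A (by omega : j ≤ n3),
      extSlice_add_eq_sub A (by omega : j + 1 ≤ n3), add_comm]

lemma blockEntry_pred (A : Tensor n1 n2 n3) (i j : ℕ) :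
    blockEntry A (i - 1) j = extSlice A (i - (j + 1) + (j + 1 - i)) + extSlice A (i + j) := by
  rcases Nat.eq_zero_or_pos i with rfl | h
  · rw [blockEntry, add_comm]
    simp
  · rw [blockEntry, show i - 1 + j + 1 = i + j by omega,
      show i - 1 - j + (j - (i - 1)) = i - (j + 1) + (j + 1 - i) by omega]

lemma blockEntry_neighbours_comm (A : Tensor n1 n2 n3) {i j : ℕ} (hi : i < n3) (hj : j < n3) :
    blockEntry A (min (i + 1) (n3 - 1)) j + blockEntry A (i - 1) j =
      blockEntry A (min (j + 1) (n3 - 1)) i + blockEntry A (j - 1) i := by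
  rw [blockEntry_succ_clamp A hi hj, blockEntry_succ_clamp A hj hi, blockEntry_pred,
    blockEntry_pred,
    show j + 1 - i + (i - (j + 1)) = i - (j + 1) + (j + 1 - i) by omega,
    show j - (i + 1) + (i + 1 - j) = i + 1 - j + (j - (i + 1)) by omega,
    Nat.add_comm j i]
  abel

def reflSucc {n : ℕ} (i : Fin n) : Fin n := ⟨min (i + 1) (n - 1), by omega⟩

/-- `0 - 1 = 0` in `ℕ`, so `0` is sent to itself. -/
def reflPred {n : ℕ} (i : Fin n) : Fin n := ⟨i - 1, by omega⟩

def pathAdj (n : ℕ) : Matrix (Fin n) (Fin n) ℂ :=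
  of fun i j => (if j = reflSucc i then 1 else 0) + (if j = reflPred i then 1 else 0)

lemma pathAdj_transpose (n : ℕ) : (pathAdj n)ᵀ = pathAdj n := by
  ext i j
  simp only [transpose_apply, pathAdj, of_apply, reflSucc, reflPred, Fin.ext_iff]
  split_ifs <;> first | omega | norm_num

def blockShift (n3 n : ℕ) : Matrix (Fin n3 × Fin n) (Fin n3 × Fin n) ℂ :=
  pathAdj n3 ⊗ₖ 1

lemma blockShift_mul_apply {n : ℕ} {κ : Type*} [Fintype κ] (M : Matrix (Fin n3 × Fin n) κ ℂ)
    (i : Fin n3) (a : Fin n) (q : κ) :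
    (blockShift n3 n * M) (i, a) q = M (reflSucc i, a) q + M (reflPred i, a) q := by
  simp [blockShift, pathAdj, mul_apply, Fintype.sum_prod_type, one_apply, add_mul,
    Finset.sum_add_distrib]

lemma mul_blockShift_apply {n : ℕ} {κ : Type*} [Fintype κ] (M : Matrix κ (Fin n3 × Fin n) ℂ)
    (p : κ) (j : Fin n3) (b : Fin n) :
    (M * blockShift n3 n) p (j, b) = M p (reflSucc j, b) + M p (reflPred j, b) := by
  have hK : (blockShift n3 n)ᵀ = blockShift n3 n := by
    rw [blockShift, ← kroneckerMap_transpose, pathAdj_transpose, transpose_one]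
  rw [← transpose_apply (M * _), transpose_mul, hK, blockShift_mul_apply]
  rfl

lemma blockShift_mul_matT (A : Tensor n1 n2 n3) :
    blockShift n3 n1 * matT A = matT A * blockShift n3 n2 := by
  ext ⟨i, a⟩ ⟨j, b⟩
  simp only [blockShift_mul_apply, mul_blockShift_apply, matT_apply, ← Matrix.add_apply]
  rw [blockEntry_comm A i, blockEntry_comm A i]
  exact congrFun₂ (blockEntry_neighbours_comm A i.2 j.2) a b

lemma eq_zero_of_blockShift_mul_eq {n n' : ℕ}
    {D : Matrix (Fin n3 × Fin n) (Fin n3 × Fin n') ℂ}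
    (hD : blockShift n3 n * D = D * blockShift n3 n')
    (h0 : ∀ p b (h : 0 < n3), D p (⟨0, h⟩, b) = 0) : D = 0 := by
  suffices h : ∀ j (hj : j < n3) p b, D p (⟨j, hj⟩, b) = 0 by
    ext p ⟨j, b⟩
    exact h j j.2 p b
  intro j
  induction j using Nat.strong_induction_on with
  | _ j ih =>
  rintro hj p b
  rcases j with _ | k
  · exact h0 p b hj
  -- Column `k + 1` of `D * K` is column `k` of `K * D` minus column `k - 1` of `D`.
  have hcol : (D * blockShift n3 n') p (⟨k, by omega⟩, b) = 0 := by
    obtain ⟨i, a⟩ := p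
    rw [← hD, blockShift_mul_apply, ih k (by omega), ih k (by omega), add_zero]
  have hsucc : reflSucc (⟨k, by omega⟩ : Fin n3) = ⟨k + 1, hj⟩ := by
    ext
    simp only [reflSucc]
    omega
  rwa [mul_blockShift_apply, hsucc, reflPred, ih (k - 1) (by omega), add_zero] at hcol

def altTail {n : ℕ} (c : Fin n → ℂ) (i : ℕ) : ℂ :=
  ∑ t : Fin n, if i ≤ t then (-1) ^ (t - i : ℕ) * c t else 0

lemma altTail_self {n : ℕ} (c : Fin n → ℂ) : altTail c n = 0 :=
  Finset.sum_eq_zero fun t _ => if_neg (by omega)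

lemma altTail_add_altTail_succ {n : ℕ} (c : Fin n → ℂ) (i : Fin n) :
    altTail c i + altTail c (i + 1) = c i := by
  have hterm : ∀ t : Fin n, ((if (i : ℕ) ≤ t then (-1) ^ (t - i : ℕ) * c t else 0) +
      if (i : ℕ) + 1 ≤ t then (-1) ^ (t - (i + 1) : ℕ) * c t else 0) =
        if i = t then c t else 0 := by
    intro t
    rcases lt_trichotomy (i : ℕ) t with h | h | h
    · rw [if_pos h.le, if_pos (show (i : ℕ) + 1 ≤ t by omega), if_neg (Fin.ne_of_lt h),
        show (t - i : ℕ) = t - (i + 1) + 1 by omega, pow_succ]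
      ring
    · rw [if_pos h.le, if_neg (by omega), if_pos (Fin.ext h), h, Nat.sub_self]
      simp
    · rw [if_neg (by omega), if_neg (by omega), if_neg (Fin.ne_of_gt h), add_zero]
  rw [altTail, altTail, ← Finset.sum_add_distrib, Finset.sum_congr rfl fun t _ => hterm t,
    Finset.sum_ite_eq, if_pos (Finset.mem_univ i)]

lemma altTail_eq {n : ℕ} (v : ℕ → ℂ) (hv : v n = 0) {i : ℕ} (hi : i ≤ n) :
    altTail (fun t : Fin n => v t + v (t + 1)) i = v i := by
  induction hi using Nat.decreasingInduction with
  | self => rw [altTail_self, hv]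
  | of_succ k hk ih =>
    have h := altTail_add_altTail_succ (fun t : Fin n => v t + v (t + 1)) ⟨k, hk⟩
    simp only at h
    rw [ih] at h
    exact add_right_cancel h

lemma tenT_apply (M : Matrix (Fin n3 × Fin n1) (Fin n3 × Fin n2) ℂ) (i : Fin n3) (a : Fin n1)
    (b : Fin n2) : tenT M i a b = altTail (fun t => M (t, a) (⟨0, i.pos⟩, b)) i :=
  rfl

lemma extSlice_tenT (M : Matrix (Fin n3 × Fin n1) (Fin n3 × Fin n2) ℂ) (hn : 0 < n3) {k : ℕ}
    (hk : k ≤ n3) (a : Fin n1) (b : Fin n2) :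
    extSlice (tenT M) k a b = altTail (fun t => M (t, a) (⟨0, hn⟩, b)) k := by
  rcases hk.lt_or_eq with hk | rfl
  · rw [extSlice_of_lt _ hk, tenT_apply]
  · rw [extSlice_self, altTail_self, Matrix.zero_apply]

lemma matT_apply_zero (A : Tensor n1 n2 n3) (t : Fin n3) (hn : 0 < n3) (a : Fin n1) (b : Fin n2) :
    matT A (t, a) (⟨0, hn⟩, b) = extSlice A t a b + extSlice A (t + 1) a b := by
  rw [matT_apply, blockEntry]
  simp

lemma tenT_matT (A : Tensor n1 n2 n3) : tenT (matT A) = A := by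
  ext i a b
  simp only [tenT_apply, matT_apply_zero]
  rw [altTail_eq (fun k => extSlice A k a b) (by simp [extSlice_self]) i.2.le, extSlice_of_lt _ i.2]

lemma matT_injective : Function.Injective (matT : Tensor n1 n2 n3 → _) :=
  Function.LeftInverse.injective tenT_matT

lemma matT_tenT {M : Matrix (Fin n3 × Fin n1) (Fin n3 × Fin n2) ℂ}
    (hM : blockShift n3 n1 * M = M * blockShift n3 n2) : matT (tenT M) = M := by
  refine sub_eq_zero.mp (eq_zero_of_blockShift_mul_eq ?_ fun ⟨t, a⟩ b hn => ?_)
  · rw [Matrix.mul_sub, Matrix.sub_mul, blockShift_mul_matT, hM]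
  · rw [Matrix.sub_apply, matT_apply_zero, extSlice_tenT M hn t.2.le, extSlice_tenT M hn t.2,
      altTail_add_altTail_succ, sub_self]

lemma matT_cmul {l : ℕ} (A : Tensor n1 n2 n3) (B : Tensor n2 l n3) :
    matT (cmul A B) = matT A * matT B :=
  matT_tenT <| by
    rw [← Matrix.mul_assoc, blockShift_mul_matT, Matrix.mul_assoc, blockShift_mul_matT,
      Matrix.mul_assoc]

lemma matT_conjT (A : Tensor n1 n2 n3) : matT (conjT A) = (matT A)ᴴ := by
  ext ⟨i, b⟩ ⟨j, a⟩
  rw [conjTranspose_apply, matT_apply, matT_apply, blockEntry_comm, blockEntry, blockEntry,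
    conjT_extSlice, conjT_extSlice, ← conjTranspose_add]
  rfl

lemma isMP_iff_isMoorePenrose (A : Tensor n1 n2 n3) (X : Tensor n2 n1 n3) :
    IsMP A X ↔ (matT A).IsMoorePenrose (matT X) := by
  simp only [IsMP, IsMoorePenrose, ← matT_injective.eq_iff, matT_cmul, matT_conjT]

end Tensor

theorem stmt1 {n1 n2 n3 : ℕ} (A : Tensor n1 n2 n3) :
    ∃! X : Tensor n2 n1 n3, IsMP A X := by
  have hM : blockShift n3 n2 * (matT A).pinv = (matT A).pinv * blockShift n3 n1 :=
    (matT A).mul_pinv_eq_pinv_mul (blockShift_mul_matT A)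
      (by rw [← matT_conjT, blockShift_mul_matT])
  refine ⟨tenT (matT A).pinv, (isMP_iff_isMoorePenrose _ _).mpr ?_,
    fun Y hY => matT_injective ?_⟩
  · rw [matT_tenT hM]
    exact (matT A).isMoorePenrose_pinv
  · rw [matT_tenT hM]
    exact ((isMP_iff_isMoorePenrose A Y).mp hY).unique (matT A).isMoorePenrose_pinv
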